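/- arXiv:2604.02260 — 3 statements merged into one kernel-verified Lean document; each statement's English description precedes it below -/
import Mathlib

section
/- Let Π be a nonempty type and let J, Ĵ, Σf, Σμ : Π → ℝ be functions, and let λ ≥ 0 and B ≥ 0 be real numbers. Assume that for every π ∈ Π, |Ĵ(π) − J(π)| ≤ λ·Σμ(π) + B and |Ĵ(π) − J(π)| ≤ λ·Σf(π) + B. Let π̂ ∈ Π satisfy Ĵ(π) + λ·Σμ(π) ≤ Ĵ(π̂) + λ·Σμ(π̂) for all π ∈ Π (π̂ maximizes the optimistic objective). Then for every π⋆ ∈ Π, J(π⋆) − J(π̂) ≤ λ·Σf(π̂) + λ·Σμ(π̂) + 2B. -/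
theorem optimistic_regret_core_general {Pol : Type*}
    (J Jhat Sf Smu : Pol → ℝ) (lam B : ℝ)
    (h1 : ∀ π : Pol, |Jhat π - J π| ≤ lam * Smu π + B)
    (h2 : ∀ π : Pol, |Jhat π - J π| ≤ lam * Sf π + B)
    (πhat : Pol)
    (hopt : ∀ π : Pol, Jhat π + lam * Smu π ≤ Jhat πhat + lam * Smu πhat) :
    ∀ πstar : Pol,
      J πstar - J πhat ≤ lam * Sf πhat + lam * Smu πhat + 2 * B := by
  intro πstar
  calc J πstar - J πhat
      ≤ (Jhat πstar + lam * Smu πstar + B) - J πhat := by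
        linarith [neg_le_of_abs_le (h1 πstar)]
    _ ≤ (Jhat πhat + lam * Smu πhat + B) - J πhat := by linarith [hopt πstar]
    _ ≤ lam * Sf πhat + lam * Smu πhat + 2 * B := by
        linarith [le_of_abs_le (h2 πhat)]

/-- Deterministic core of the optimistic regret argument:
if the model return `Ĵ` is within `λ·Smu + B` and `λ·Sf + B` of the true
return `J`, and `π̂` maximizes the optimistic objective `Ĵ + λ·Smu`, then
the regret against any comparator `π⋆` is bounded. -/
theorem optimistic_regret_core {Pol : Type*} [Nonempty Pol]
    (J Jhat Sf Smu : Pol → ℝ) (lam B : ℝ)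
    (hlam : 0 ≤ lam) (hB : 0 ≤ B)
    (h1 : ∀ π : Pol, |Jhat π - J π| ≤ lam * Smu π + B)
    (h2 : ∀ π : Pol, |Jhat π - J π| ≤ lam * Sf π + B)
    (πhat : Pol)
    (hopt : ∀ π : Pol, Jhat π + lam * Smu π ≤ Jhat πhat + lam * Smu πhat) :
    ∀ πstar : Pol,
      J πstar - J πhat ≤ lam * Sf πhat + lam * Smu πhat + 2 * B :=
  optimistic_regret_core_general J Jhat Sf Smu lam B h1 h2 πhat hopt
end

section
/- Let Π be a nonempty type and let J, Ĵ, Σf, Σμ : Π → ℝ be functions, and let λ ≥ 0 and B ≥ 0 be real numbers. Assume that for every π ∈ Π: (i) |Ĵ(π) − J(π)| ≤ λ·Σμ(π) + B, (ii) |Ĵ(π) − J(π)| ≤ λ·Σf(π) + B, and (iii) |Σμ(π) − Σf(π)| ≤ λ·Σf(π) + B. Let π̂ ∈ Π satisfy Ĵ(π) + λ·Σμ(π) ≤ Ĵ(π̂) + λ·Σμ(π̂) for all π ∈ Π. Then for every π⋆ ∈ Π, J(π⋆) − J(π̂) ≤ (λ² + 2λ)·Σf(π̂) + (λ + 2)·B.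 -/
/-!
Optimism bounds the comparator's true return by the optimistic value of `πhat`:
`J π⋆ ≤ Ĵ π⋆ + λ Σμ π⋆ + B ≤ Ĵ π̂ + λ Σμ π̂ + B`. Passing back from the model to the true
dynamics at `π̂` costs `λ Σf π̂ + B`, and the exploration bonus `λ Σμ π̂` is traded for
`λ (1 + λ) Σf π̂ + λ B` because `Σ` itself obeys the same model-error bound.
-/

theorem le_optimistic_value_add {Pol : Type*} {J Jhat S : Pol → ℝ} {lam B : ℝ}
    {πhat πstar : Pol}
    (hmodel : |Jhat πstar - J πstar| ≤ lam * S πstar + B)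
    (hopt : ∀ π : Pol, Jhat π + lam * S π ≤ Jhat πhat + lam * S πhat) :
    J πstar ≤ Jhat πhat + lam * S πhat + B := by
  linarith [neg_le_of_abs_le hmodel, hopt πstar]

theorem mul_le_of_abs_sub_le_mul_add {s t lam B : ℝ} (hlam : 0 ≤ lam)
    (h : |s - t| ≤ lam * t + B) :
    lam * s ≤ (lam ^ 2 + lam) * t + lam * B := by
  have hs : s ≤ (1 + lam) * t + B := by linarith [(le_abs_self _).trans h]
  calc lam * s ≤ lam * ((1 + lam) * t + B) := mul_le_mul_of_nonneg_left hs hlam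
    _ = (lam ^ 2 + lam) * t + lam * B := by ring

theorem episodic_regret_core_general {Pol : Type*}
    (J Jhat Sf Smu : Pol → ℝ) (lam B : ℝ)
    (hlam : 0 ≤ lam)
    (h1 : ∀ π : Pol, |Jhat π - J π| ≤ lam * Smu π + B)
    (h2 : ∀ π : Pol, |Jhat π - J π| ≤ lam * Sf π + B)
    (h3 : ∀ π : Pol, |Smu π - Sf π| ≤ lam * Sf π + B)
    (πhat : Pol)
    (hopt : ∀ π : Pol, Jhat π + lam * Smu π ≤ Jhat πhat + lam * Smu πhat) :
    ∀ πstar : Pol,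
      J πstar - J πhat ≤ (lam ^ 2 + 2 * lam) * Sf πhat + (lam + 2) * B := by
  intro πstar
  have hstar : J πstar ≤ Jhat πhat + lam * Smu πhat + B :=
    le_optimistic_value_add (h1 πstar) hopt
  have hhat : Jhat πhat - J πhat ≤ lam * Sf πhat + B := (le_abs_self _).trans (h2 πhat)
  have hbonus := mul_le_of_abs_sub_le_mul_add hlam (h3 πhat)
  linarith

/-- Deterministic core of the episodic regret bound (Lemma A.2 structure):
with the additional hypothesis that the epistemic uncertainty behaves like
a bounded intrinsic reward, the regret of the optimistic policy `π̂`
against any comparator is bounded by `(λ² + 2λ)·Sf(π̂) + (λ + 2)·B`. -/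
theorem episodic_regret_core {Pol : Type*} [Nonempty Pol]
    (J Jhat Sf Smu : Pol → ℝ) (lam B : ℝ)
    (hlam : 0 ≤ lam) (hB : 0 ≤ B)
    (h1 : ∀ π : Pol, |Jhat π - J π| ≤ lam * Smu π + B)
    (h2 : ∀ π : Pol, |Jhat π - J π| ≤ lam * Sf π + B)
    (h3 : ∀ π : Pol, |Smu π - Sf π| ≤ lam * Sf π + B)
    (πhat : Pol)
    (hopt : ∀ π : Pol, Jhat π + lam * Smu π ≤ Jhat πhat + lam * Smu πhat) :
    ∀ πstar : Pol,
      J πstar - J πhat ≤ (lam ^ 2 + 2 * lam) * Sf πhat + (lam + 2) * B :=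
  episodic_regret_core_general J Jhat Sf Smu lam B hlam h1 h2 h3 πhat hopt
end

section
/- Let p ≥ 1 and Q be natural numbers, set N = Q·p, and let λ ≥ 0, c ≥ 0, G ≥ 0, P ≥ 0 be reals. Let m : ℕ → ℕ satisfy 1 ≤ m(n) ≤ n and n − m(n) ≤ p for every n with 1 ≤ n ≤ N. Let x, d, r : ℕ → ℝ satisfy: x(n) ≥ 0 and d(n) ≥ 0 for all n; for every q with 0 ≤ q < Q, ∑_{h=1}^{p} x(q·p + h)² ≤ G; ∑_{s=1}^{N−1} d(s) ≤ P; and for every n with 1 ≤ n ≤ N, r(n) ≤ (λ² + 2λ)·x(n) + (λ + 2)·c·∑_{s=m(n)}^{n−1} d(s). Then ∑_{n=1}^{N} r(n) ≤ (λ² + 2λ)·N·√(G/p) + (λ + 2)·c·p·P. -/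
open Finset

/-!
Split the `N = Q·p` episodes into `Q` blocks of `p` consecutive ones. On each block,
Cauchy–Schwarz turns the information-gain bound `∑ x² ≤ G` into `∑ x ≤ p·√(G/p)`, so the
uncertainty terms sum to at most `N·√(G/p)`. Each drift increment `d s` lies in the window
`[m n, n - 1]` of at most `p` episodes `n` (namely `s < n ≤ s + p`), so the drift terms sum
to at most `p·P`.
-/

theorem Finset.sum_le_card_mul_sqrt_div {ι : Type*} (s : Finset ι) (f : ι → ℝ) {G : ℝ}
    (h : ∑ i ∈ s, f i ^ 2 ≤ G) : ∑ i ∈ s, f i ≤ #s * √(G / #s) := by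
  rcases s.eq_empty_or_nonempty with rfl | hs
  · simp
  have hcard : (0 : ℝ) < #s := by exact_mod_cast hs.card_pos
  calc ∑ i ∈ s, f i ≤ √((∑ i ∈ s, f i) ^ 2) := by
        rw [Real.sqrt_sq_eq_abs]; exact le_abs_self _
    _ ≤ √(#s * G) :=
        Real.sqrt_le_sqrt (sq_sum_le_card_mul_sum_sq.trans (by gcongr))
    _ = √((#s : ℝ) ^ 2 * (G / #s)) := by congr 1; field_simp
    _ = #s * √(G / #s) := by rw [Real.sqrt_mul (sq_nonneg _), Real.sqrt_sq hcard.le]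

theorem Finset.sum_Icc_one_mul_eq_sum_range_sum_Icc_one {M : Type*} [AddCommMonoid M]
    (f : ℕ → M) (Q p : ℕ) :
    ∑ n ∈ Icc 1 (Q * p), f n = ∑ q ∈ range Q, ∑ h ∈ Icc 1 p, f (q * p + h) := by
  induction Q with
  | zero => simp
  | succ Q ih =>
    rw [sum_range_succ, ← ih, Nat.succ_mul, ← zero_add 1, Icc_add_one_left_eq_Ioc,
      Icc_add_one_left_eq_Ioc, Icc_add_one_left_eq_Ioc,
      ← sum_Ioc_consecutive _ (Nat.zero_le _) (Nat.le_add_right _ _),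
      ← sum_image (add_right_injective (Q * p)).injOn, image_add_left_Ioc, add_zero]

theorem Finset.sum_sum_le_mul_sum_of_card_filter_le {ι κ : Type*} [DecidableEq ι]
    (u : Finset κ) (t : Finset ι) (W : κ → Finset ι) (d : ι → ℝ) (p : ℕ)
    (hd : ∀ i ∈ t, 0 ≤ d i) (hW : ∀ n ∈ u, W n ⊆ t)
    (hcount : ∀ i ∈ t, #{n ∈ u | i ∈ W n} ≤ p) :
    ∑ n ∈ u, ∑ i ∈ W n, d i ≤ p * ∑ i ∈ t, d i := by
  rw [sum_comm' (t' := t) (s' := fun i ↦ {n ∈ u | i ∈ W n})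
    (fun n i ↦ by simp only [mem_filter]; exact ⟨fun h ↦ ⟨h, hW n h.1 h.2⟩, fun h ↦ h.1⟩),
    mul_sum]
  refine sum_le_sum fun i hi ↦ ?_
  rw [sum_const, nsmul_eq_mul]
  exact mul_le_mul_of_nonneg_right (by exact_mod_cast hcount i hi) (hd i hi)

theorem card_filter_mem_window_le {N p : ℕ} {m : ℕ → ℕ}
    (hm : ∀ n, 1 ≤ n → n ≤ N → n - m n ≤ p) (s : ℕ) :
    #{n ∈ Icc 1 N | s ∈ Icc (m n) (n - 1)} ≤ p := by
  have hsub : {n ∈ Icc 1 N | s ∈ Icc (m n) (n - 1)} ⊆ Icc (s + 1) (s + p) := by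
    intro n hn
    simp only [mem_filter, mem_Icc] at hn ⊢
    have := hm n hn.1.1 hn.1.2
    omega
  simpa using card_le_card hsub

theorem dynamic_regret_aggregation_general (p Q N : ℕ) (hN : N = Q * p)
    (lam c G P : ℝ) (hlam : 0 ≤ lam) (hc : 0 ≤ c)
    (m : ℕ → ℕ)
    (hm : ∀ n, 1 ≤ n → n ≤ N → 1 ≤ m n ∧ m n ≤ n ∧ n - m n ≤ p)
    (x d r : ℕ → ℝ) (hd : ∀ n, 0 ≤ d n)
    (hgrp : ∀ q, q < Q → ∑ h ∈ Finset.Icc 1 p, (x (q * p + h)) ^ 2 ≤ G)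
    (hdP : ∑ s ∈ Finset.Icc 1 (N - 1), d s ≤ P)
    (hr : ∀ n, 1 ≤ n → n ≤ N →
      r n ≤ (lam ^ 2 + 2 * lam) * x n +
        (lam + 2) * c * ∑ s ∈ Finset.Icc (m n) (n - 1), d s) :
    ∑ n ∈ Finset.Icc 1 N, r n ≤
      (lam ^ 2 + 2 * lam) * (N : ℝ) * Real.sqrt (G / p) +
        (lam + 2) * c * (p : ℝ) * P := by
  have hx_total : ∑ n ∈ Icc 1 N, x n ≤ N * √(G / p) := by
    rw [hN, sum_Icc_one_mul_eq_sum_range_sum_Icc_one]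
    calc _ ≤ ∑ _q ∈ range Q, (p : ℝ) * √(G / p) := sum_le_sum fun q hq ↦ by
            simpa using sum_le_card_mul_sqrt_div _ _ (hgrp q (mem_range.1 hq))
      _ = _ := by simp [mul_assoc]
  have hd_total : ∑ n ∈ Icc 1 N, ∑ s ∈ Icc (m n) (n - 1), d s ≤ p * P := by
    have hwindow : ∀ n ∈ Icc 1 N, Icc (m n) (n - 1) ⊆ Icc 1 (N - 1) := fun n hn ↦ by
      obtain ⟨h1, h2⟩ := mem_Icc.1 hn
      exact Icc_subset_Icc (hm n h1 h2).1 (Nat.sub_le_sub_right h2 1)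
    calc _ ≤ p * ∑ s ∈ Icc 1 (N - 1), d s :=
          sum_sum_le_mul_sum_of_card_filter_le _ _ _ d p (fun s _ ↦ hd s) hwindow
            fun s _ ↦ card_filter_mem_window_le (fun n h1 h2 ↦ (hm n h1 h2).2.2) s
      _ ≤ p * P := by gcongr
  calc ∑ n ∈ Icc 1 N, r n
      ≤ ∑ n ∈ Icc 1 N, ((lam ^ 2 + 2 * lam) * x n +
          (lam + 2) * c * ∑ s ∈ Icc (m n) (n - 1), d s) :=
        sum_le_sum fun n hn ↦ hr n (mem_Icc.1 hn).1 (mem_Icc.1 hn).2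
    _ = (lam ^ 2 + 2 * lam) * ∑ n ∈ Icc 1 N, x n +
          (lam + 2) * c * ∑ n ∈ Icc 1 N, ∑ s ∈ Icc (m n) (n - 1), d s := by
        rw [sum_add_distrib, ← mul_sum, ← mul_sum]
    _ ≤ (lam ^ 2 + 2 * lam) * (N * √(G / p)) + (lam + 2) * c * (p * P) := by
        gcongr
    _ = _ := by ring

/-- Deterministic aggregation core of the main dynamic-regret theorem:
episodic regret bounds combine with the groupwise information-gain bound
and the variation budget to give the total regret bound
`(λ² + 2λ)·N·√(G/p) + (λ + 2)·c·p·P`. -/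
theorem dynamic_regret_aggregation (p Q N : ℕ) (hp : 1 ≤ p) (hN : N = Q * p)
    (lam c G P : ℝ) (hlam : 0 ≤ lam) (hc : 0 ≤ c) (hG : 0 ≤ G) (hP : 0 ≤ P)
    (m : ℕ → ℕ)
    (hm : ∀ n, 1 ≤ n → n ≤ N → 1 ≤ m n ∧ m n ≤ n ∧ n - m n ≤ p)
    (x d r : ℕ → ℝ) (hx : ∀ n, 0 ≤ x n) (hd : ∀ n, 0 ≤ d n)
    (hgrp : ∀ q, q < Q → ∑ h ∈ Finset.Icc 1 p, (x (q * p + h)) ^ 2 ≤ G)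
    (hdP : ∑ s ∈ Finset.Icc 1 (N - 1), d s ≤ P)
    (hr : ∀ n, 1 ≤ n → n ≤ N →
      r n ≤ (lam ^ 2 + 2 * lam) * x n +
        (lam + 2) * c * ∑ s ∈ Finset.Icc (m n) (n - 1), d s) :
    ∑ n ∈ Finset.Icc 1 N, r n ≤
      (lam ^ 2 + 2 * lam) * (N : ℝ) * Real.sqrt (G / p) +
        (lam + 2) * c * (p : ℝ) * P :=
  dynamic_regret_aggregation_general p Q N hN lam c G P hlam hc m hm x d r hd hgrp hdP hr
end
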